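/- Let L, C₀, B be nonnegative integers. For every real q with 0 < q < 1, Σ_{m=0}^{∞} (−1)^m q^{(m² − m)/2 − L m} [B + C₀ − m choose B]_q [B + 1 + L choose m]_q = (−1)^{C₀} q^{C₀(C₀−1)/2 − C₀ L} [L choose C₀]_q; the sum on the left has only finitely many nonzero terms. In particular the left-hand side vanishes whenever C₀ > L. -/
import Mathlib


open Finset

noncomputable section

/-- `(q)_k = ∏_{j=1}^k (1 - q^j)`. -/
def qPoch (q : ℝ) (k : ℕ) : ℝ := ∏ j ∈ Finset.range k, (1 - q ^ (j + 1))

/-- The `q`-binomial coefficient `[N choose m]_q`, vanishing unless `0 ≤ m ≤ N`. -/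
def qBinI (q : ℝ) (N m : ℤ) : ℝ :=
  if 0 ≤ m ∧ m ≤ N then qPoch q N.toNat / (qPoch q m.toNat * qPoch q (N - m).toNat) else 0

def qb (q : ℝ) (n k : ℕ) : ℝ :=
  if k ≤ n then qPoch q n / (qPoch q k * qPoch q (n - k)) else 0

variable {q : ℝ}

lemma qPoch_pos (hq0 : 0 < q) (hq1 : q < 1) (k : ℕ) : 0 < qPoch q k := by
  apply Finset.prod_pos
  intro j _
  have : q ^ (j + 1) < 1 := pow_lt_one₀ hq0.le hq1 (Nat.succ_ne_zero j)
  linarith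

lemma qPoch_ne_zero (hq0 : 0 < q) (hq1 : q < 1) (k : ℕ) : qPoch q k ≠ 0 :=
  (qPoch_pos hq0 hq1 k).ne'

lemma qPoch_zero : qPoch q 0 = 1 := by simp [qPoch]

lemma qPoch_succ (n : ℕ) : qPoch q (n + 1) = qPoch q n * (1 - q ^ (n + 1)) := by
  simp [qPoch, Finset.prod_range_succ]

lemma one_sub_pow_ne_zero (hq0 : 0 < q) (hq1 : q < 1) (k : ℕ) : (1 : ℝ) - q ^ (k + 1) ≠ 0 := by
  have : q ^ (k + 1) < 1 := pow_lt_one₀ hq0.le hq1 (Nat.succ_ne_zero k)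
  linarith

lemma qb_zero_right (hq0 : 0 < q) (hq1 : q < 1) (n : ℕ) : qb q n 0 = 1 := by
  simp [qb, qPoch_zero, qPoch_ne_zero hq0 hq1 n]

lemma qb_self (hq0 : 0 < q) (hq1 : q < 1) (n : ℕ) : qb q n n = 1 := by
  simp [qb, qPoch_zero, qPoch_ne_zero hq0 hq1 n]

lemma qb_of_lt {n k : ℕ} (h : n < k) : qb q n k = 0 := by
  simp [qb, Nat.not_le.mpr h]

lemma pascal1 (hq0 : 0 < q) (hq1 : q < 1) (n k : ℕ) :
    qb q (n + 1) (k + 1) = q ^ (k + 1) * qb q n (k + 1) + qb q n k := by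
  rcases lt_trichotomy n k with h | rfl | h
  · rw [qb_of_lt (by omega), qb_of_lt (by omega), qb_of_lt h]
    ring
  · rw [qb_self hq0 hq1, qb_of_lt (by omega), qb_self hq0 hq1]
    ring
  · -- k < n
    obtain ⟨d, rfl⟩ : ∃ d, n = k + 1 + d := ⟨n - (k+1), by omega⟩
    have h1 : k + 1 + d + 1 - (k + 1) = d + 1 := by omega
    have h2 : k + 1 + d - (k + 1) = d := by omega
    have h3 : k + 1 + d - k = d + 1 := by omega
    rw [qb, qb, qb, if_pos (by omega), if_pos (by omega), if_pos (by omega), h1, h2, h3]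
    rw [show k + 1 + d + 1 = (k + 1 + d) + 1 from rfl, qPoch_succ (k + 1 + d),
      qPoch_succ d, qPoch_succ k]
    have e1 := qPoch_ne_zero hq0 hq1 (k + 1 + d)
    have e2 := qPoch_ne_zero hq0 hq1 d
    have e3 := qPoch_ne_zero hq0 hq1 k
    have e4 := one_sub_pow_ne_zero hq0 hq1 d
    have e5 := one_sub_pow_ne_zero hq0 hq1 k
    have hp : q ^ (k + 1 + d + 1) = q ^ (k + 1) * q ^ (d + 1) := by
      rw [← pow_add]; ring_nf
    rw [hp]
    field_simp
    ring
  done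

lemma pascal2 (hq0 : 0 < q) (hq1 : q < 1) (n k : ℕ) :
    qb q (n + 1) (k + 1) = qb q n (k + 1) + q ^ (n - k) * qb q n k := by
  rcases lt_trichotomy n k with h | rfl | h
  · rw [qb_of_lt (by omega), qb_of_lt (by omega), qb_of_lt h]
    ring
  · rw [qb_self hq0 hq1, qb_of_lt (by omega), qb_self hq0 hq1]
    simp
  · obtain ⟨d, rfl⟩ : ∃ d, n = k + 1 + d := ⟨n - (k+1), by omega⟩
    have h1 : k + 1 + d + 1 - (k + 1) = d + 1 := by omega
    have h2 : k + 1 + d - (k + 1) = d := by omega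
    have h3 : k + 1 + d - k = d + 1 := by omega
    rw [qb, qb, qb, if_pos (by omega), if_pos (by omega), if_pos (by omega), h1, h2, h3]
    rw [show k + 1 + d + 1 = (k + 1 + d) + 1 from rfl, qPoch_succ (k + 1 + d),
      qPoch_succ d, qPoch_succ k]
    have e1 := qPoch_ne_zero hq0 hq1 (k + 1 + d)
    have e2 := qPoch_ne_zero hq0 hq1 d
    have e3 := qPoch_ne_zero hq0 hq1 k
    have e4 := one_sub_pow_ne_zero hq0 hq1 d
    have e5 := one_sub_pow_ne_zero hq0 hq1 k
    have hp : q ^ (k + 1 + d + 1) = q ^ (d + 1) * q ^ (k + 1) := by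
      rw [← pow_add]; ring_nf
    rw [hp]
    field_simp
    ring

lemma choose_two_succ (m : ℕ) : (m + 1).choose 2 = m.choose 2 + m := by
  rw [Nat.choose_succ_succ, Nat.choose_one_right, Nat.add_comm]

lemma lemA (hq0 : 0 < q) (hq1 : q < 1) :
    ∀ B n : ℕ, ∑ j ∈ range (n + 1),
      (-1 : ℝ) ^ j * q ^ (j.choose 2) * qb q (B + n - j) B * qb q (B + 1) j
      = if n = 0 then 1 else 0 := by
  intro B
  induction B with
  | zero =>
    intro n
    match n with
    | 0 => simp [qb_zero_right hq0 hq1, qb_self hq0 hq1]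
    | (k+1) =>
      rw [Finset.sum_range_succ', Finset.sum_range_succ']
      have hz : ∀ i ∈ range k, (-1 : ℝ) ^ (i + 1 + 1) * q ^ ((i+1+1).choose 2)
          * qb q (0 + (k+1) - (i+1+1)) 0 * qb q (0+1) (i+1+1) = 0 := by
        intro i _
        rw [show qb q (0+1) (i+1+1) = 0 from qb_of_lt (by omega)]
        ring
      rw [Finset.sum_congr rfl hz]
      simp [qb_zero_right hq0 hq1, qb_self hq0 hq1]
  | succ B ih =>
    intro n
    match n with
    | 0 => simp [qb_zero_right hq0 hq1, qb_self hq0 hq1]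
    | (k+1) =>
      rw [if_neg (Nat.succ_ne_zero k)]
      rw [Finset.sum_range_succ']
      -- split f(i+1) via pascal2
      have hsplit : ∀ i ∈ range (k + 1),
          (-1 : ℝ) ^ (i+1) * q ^ ((i+1).choose 2) * qb q (B + 1 + (k+1) - (i+1)) (B+1)
            * qb q (B + 2) (i+1)
          = ((-1 : ℝ) ^ (i+1) * q ^ ((i+1).choose 2) * qb q (B + 1 + (k+1) - (i+1)) (B+1)
              * qb q (B + 1) (i+1))
            + (-(q ^ (B+1))) * ((-1 : ℝ) ^ i * q ^ (i.choose 2) * qb q (B + 1 + k - i) (B+1)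
              * qb q (B + 1) i) := by
        intro i hi
        have hi' : i ≤ k := by simpa using Nat.lt_succ_iff.mp (Finset.mem_range.mp hi)
        have hp := pascal2 hq0 hq1 (B + 1) i
        rw [show B + 1 + 1 = B + 2 from rfl] at hp
        rw [hp]
        have hidx : B + 1 + (k + 1) - (i + 1) = B + 1 + k - i := by omega
        rw [hidx]
        by_cases hib : i ≤ B + 1
        · have hexp : ((i+1).choose 2) + (B + 1 - i) = i.choose 2 + (B + 1) := by
            rw [choose_two_succ]; omega
          have : q ^ ((i+1).choose 2) * q ^ (B + 1 - i) = q ^ (i.choose 2) * q ^ (B+1) := by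
            rw [← pow_add, ← pow_add, hexp]
          linear_combination ((-1 : ℝ)^(i+1) * qb q (B+1+k-i) (B+1) * qb q (B+1) i) * this
        · rw [qb_of_lt (by omega : B + 1 < i + 1), qb_of_lt (by omega : B + 1 < i)]
          ring
      rw [Finset.sum_congr rfl hsplit, Finset.sum_add_distrib, ← Finset.mul_sum]
      have hf0 : qb q (B + 2) 0 = qb q (B + 1) 0 := by
        rw [qb_zero_right hq0 hq1, qb_zero_right hq0 hq1]
      rw [hf0, add_right_comm]
      have hmerge : (∑ x ∈ range (k+1), (-1:ℝ)^(x+1) * q^((x+1).choose 2)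
            * qb q (B+1+(k+1)-(x+1)) (B+1) * qb q (B+1) (x+1))
          + (-1:ℝ)^0 * q^(Nat.choose 0 2) * qb q (B+1+(k+1)-0) (B+1) * qb q (B+1) 0
          = ∑ j ∈ range (k+2), (-1:ℝ)^j * q^(j.choose 2) * qb q (B+1+(k+1)-j) (B+1) * qb q (B+1) j :=
        (Finset.sum_range_succ' (fun j => (-1:ℝ)^j * q^(j.choose 2)
          * qb q (B+1+(k+1)-j) (B+1) * qb q (B+1) j) (k+1)).symm
      rw [hmerge]
      have hterm : ∀ j ∈ range (k + 2),
          (-1:ℝ)^j * q^(j.choose 2) * qb q (B+1+(k+1)-j) (B+1) * qb q (B+1) j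
          = q^(B+1) * ((-1:ℝ)^j * q^(j.choose 2) * qb q (B+(k+1)-j) (B+1) * qb q (B+1) j)
            + (-1:ℝ)^j * q^(j.choose 2) * qb q (B+(k+1)-j) B * qb q (B+1) j := by
        intro j hj
        have hj' : j ≤ k + 1 := Nat.lt_succ_iff.mp (Finset.mem_range.mp hj)
        have hidx : B+1+(k+1)-j = (B+(k+1)-j) + 1 := by omega
        rw [hidx, pascal1 hq0 hq1 (B+(k+1)-j) B]
        ring
      rw [Finset.sum_congr rfl hterm, Finset.sum_add_distrib, ← Finset.mul_sum, ih (k+1),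
        if_neg (Nat.succ_ne_zero k)]
      have hz2 : ∑ j ∈ range (k+2), (-1:ℝ)^j * q^(j.choose 2) * qb q (B+(k+1)-j) (B+1) * qb q (B+1) j
          = ∑ j ∈ range (k+1), (-1:ℝ)^j * q^(j.choose 2) * qb q (B+1+k-j) (B+1) * qb q (B+1) j := by
        rw [Finset.sum_range_succ]
        have h0 : qb q (B+(k+1)-(k+1)) (B+1) = 0 := by
          rw [show B+(k+1)-(k+1) = B from by omega]; exact qb_of_lt (by omega)
        rw [h0, mul_zero, zero_mul, add_zero]
        refine Finset.sum_congr rfl fun j hj => ?_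
        have hj' : j ≤ k := Nat.lt_succ_iff.mp (Finset.mem_range.mp hj)
        rw [show B+(k+1)-j = B+1+k-j from by omega]
      rw [hz2]
      ring

lemma lemM (hq0 : 0 < q) (hq1 : q < 1) :
    ∀ L C B : ℕ, ∑ m ∈ range (C + 1),
      (-1 : ℝ) ^ m * q ^ (m.choose 2 + L * (C - m)) * qb q (B + C - m) B * qb q (B + 1 + L) m
      = (-1 : ℝ) ^ C * q ^ (C.choose 2) * qb q L C := by
  intro L
  induction L with
  | zero =>
    intro C B
    have h := lemA hq0 hq1 B C
    simp only [Nat.zero_mul, Nat.add_zero, Nat.add_zero] at *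
    rw [show B + 1 + 0 = B + 1 from rfl]
    rw [h]
    match C with
    | 0 => simp [qb_zero_right hq0 hq1]
    | (k+1) => rw [if_neg (Nat.succ_ne_zero k), qb_of_lt (by omega : 0 < k + 1)]; ring
  | succ L ih =>
    intro C B
    match C with
    | 0 =>
      simp only [show (0:ℕ)+1 = 1 from rfl, Finset.sum_range_one, Nat.sub_zero, Nat.add_zero,
        Nat.mul_zero, Nat.add_zero, pow_zero]
      rw [qb_zero_right hq0 hq1, qb_zero_right hq0 hq1, qb_self hq0 hq1]
      norm_num [Nat.choose]
    | (C+1) =>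
      rw [Finset.sum_range_succ']
      have hsplit : ∀ i ∈ range (C + 1),
          (-1:ℝ)^(i+1) * q^((i+1).choose 2 + (L+1)*((C+1)-(i+1))) * qb q (B+(C+1)-(i+1)) B
            * qb q (B+1+(L+1)) (i+1)
          = q^(C+1) * ((-1:ℝ)^(i+1) * q^((i+1).choose 2 + L*((C+1)-(i+1)))
              * qb q (B+(C+1)-(i+1)) B * qb q (B+1+L) (i+1))
            + (-(q^C)) * ((-1:ℝ)^i * q^(i.choose 2 + L*(C-i)) * qb q (B+C-i) B
              * qb q (B+1+L) i) := by
        intro i hi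
        have hi' : i ≤ C := Nat.lt_succ_iff.mp (Finset.mem_range.mp hi)
        have ht : (C+1) - (i+1) = C - i := by omega
        have hp := pascal1 hq0 hq1 (B+1+L) i
        rw [show B+1+L+1 = B+1+(L+1) from by ring] at hp
        rw [hp]
        have hpow1 : q^((i+1).choose 2 + (L+1)*((C+1)-(i+1))) * q^(i+1)
            = q^(C+1) * q^((i+1).choose 2 + L*((C+1)-(i+1))) := by
          rw [← pow_add, ← pow_add, ht, Nat.succ_mul]
          congr 1
          generalize L * (C - i) = u
          omega
        have hpow2 : q^((i+1).choose 2 + (L+1)*((C+1)-(i+1)))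
            = q^C * q^(i.choose 2 + L*(C-i)) := by
          rw [← pow_add, ht, Nat.succ_mul, choose_two_succ]
          congr 1
          generalize L * (C - i) = u
          omega
        have hidx : B+(C+1)-(i+1) = B+C-i := by omega
        rw [hidx]
        linear_combination (qb q (B+C-i) B * qb q (B+1+L) (i+1) * (-1:ℝ)^(i+1)) * hpow1
          + (qb q (B+C-i) B * qb q (B+1+L) i * (-1:ℝ)^(i+1)) * hpow2
      rw [Finset.sum_congr rfl hsplit, Finset.sum_add_distrib, ← Finset.mul_sum, ← Finset.mul_sum]
      have hf0 : (-1:ℝ)^0 * q^(Nat.choose 0 2 + (L+1)*((C+1)-0)) * qb q (B+(C+1)-0) B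
            * qb q (B+1+(L+1)) 0
          = q^(C+1) * ((-1:ℝ)^0 * q^(Nat.choose 0 2 + L*((C+1)-0)) * qb q (B+(C+1)-0) B
            * qb q (B+1+L) 0) := by
        rw [qb_zero_right hq0 hq1, qb_zero_right hq0 hq1]
        rw [show Nat.choose 0 2 + (L+1)*((C+1)-0) = (C+1) + (Nat.choose 0 2 + L*((C+1)-0)) from by
          rw [Nat.succ_mul]; generalize L * (C+1) = u; omega, pow_add]
        ring
      rw [hf0, add_right_comm, ← mul_add]
      have hmerge : (∑ x ∈ range (C+1), (-1:ℝ)^(x+1) * q^((x+1).choose 2 + L*((C+1)-(x+1)))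
            * qb q (B+(C+1)-(x+1)) B * qb q (B+1+L) (x+1))
          + (-1:ℝ)^0 * q^(Nat.choose 0 2 + L*((C+1)-0)) * qb q (B+(C+1)-0) B * qb q (B+1+L) 0
          = ∑ m ∈ range (C+2), (-1:ℝ)^m * q^(m.choose 2 + L*((C+1)-m))
            * qb q (B+(C+1)-m) B * qb q (B+1+L) m :=
        (Finset.sum_range_succ' (fun m => (-1:ℝ)^m * q^(m.choose 2 + L*((C+1)-m))
          * qb q (B+(C+1)-m) B * qb q (B+1+L) m) (C+1)).symm
      rw [hmerge, ih (C+1) B, ih C B, pascal1 hq0 hq1 L C, choose_two_succ, pow_add, pow_add]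
      ring

lemma two_mul_choose_two (m : ℕ) : 2 * m.choose 2 = m * (m - 1) := by
  induction m with
  | zero => rfl
  | succ j ih =>
    rw [Nat.choose_succ_succ, Nat.choose_one_right, Nat.mul_add, ih, Nat.succ_sub_one]
    cases j with
    | zero => rfl
    | succ i => simp [Nat.succ_sub_one]; ring

lemma choose2_int (m : ℕ) : ((m : ℤ) * ((m : ℤ) - 1)) / 2 = (m.choose 2 : ℤ) := by
  match m with
  | 0 => norm_num
  | (j+1) =>
    have h := two_mul_choose_two (j+1)
    rw [Nat.succ_sub_one] at h
    have h2 : ((j+1 : ℕ) : ℤ) * (((j+1 : ℕ) : ℤ) - 1) = 2 * ((j+1).choose 2 : ℤ) := by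
      push_cast
      push_cast at h
      linarith
    rw [h2, Int.mul_ediv_cancel_left _ (by norm_num)]

lemma qBinI_natCast (hq0 : 0 < q) (hq1 : q < 1) (n k : ℕ) :
    qBinI q (n : ℤ) (k : ℤ) = qb q n k := by
  unfold qBinI qb
  by_cases h : k ≤ n
  · rw [if_pos ⟨Int.natCast_nonneg k, by exact_mod_cast h⟩, if_pos h]
    have h1 : ((n : ℤ)).toNat = n := Int.toNat_natCast n
    have h2 : ((k : ℤ)).toNat = k := Int.toNat_natCast k
    have h3 : ((n : ℤ) - (k : ℤ)).toNat = n - k := by omega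
    rw [h1, h2, h3]
  · rw [if_neg, if_neg h]
    rintro ⟨_, h2⟩
    exact h (by exact_mod_cast h2)

/-- For nonnegative integers `L, C₀, B` and `0 < q < 1`,
`Σ_{m≥0} (-1)^m q^{(m²-m)/2 - Lm} [B+C₀-m choose B]_q [B+1+L choose m]_q
  = (-1)^{C₀} q^{C₀(C₀-1)/2 - C₀L} [L choose C₀]_q`;
the sum has finite support, and in particular its value vanishes when `C₀ > L`. -/
theorem q_chu_vandermonde_alternating (L C₀ B : ℕ) (q : ℝ) (hq0 : 0 < q) (hq1 : q < 1) :
    {m : ℕ | (-1 : ℝ) ^ m * q ^ ((m : ℤ) * ((m : ℤ) - 1) / 2 - (L : ℤ) * m)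
        * qBinI q ((B : ℤ) + (C₀ : ℤ) - (m : ℤ)) (B : ℤ)
        * qBinI q ((B : ℤ) + 1 + (L : ℤ)) (m : ℤ) ≠ 0}.Finite ∧
    (∑' m : ℕ, (-1 : ℝ) ^ m * q ^ ((m : ℤ) * ((m : ℤ) - 1) / 2 - (L : ℤ) * m)
        * qBinI q ((B : ℤ) + (C₀ : ℤ) - (m : ℤ)) (B : ℤ)
        * qBinI q ((B : ℤ) + 1 + (L : ℤ)) (m : ℤ))
      = (-1 : ℝ) ^ C₀ * q ^ ((C₀ : ℤ) * ((C₀ : ℤ) - 1) / 2 - (C₀ : ℤ) * (L : ℤ))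
          * qBinI q (L : ℤ) (C₀ : ℤ) ∧
    ((L : ℤ) < (C₀ : ℤ) →
      (∑' m : ℕ, (-1 : ℝ) ^ m * q ^ ((m : ℤ) * ((m : ℤ) - 1) / 2 - (L : ℤ) * m)
        * qBinI q ((B : ℤ) + (C₀ : ℤ) - (m : ℤ)) (B : ℤ)
        * qBinI q ((B : ℤ) + 1 + (L : ℤ)) (m : ℤ)) = 0) := by
  have hqne : q ≠ 0 := ne_of_gt hq0
  have hvan : ∀ m : ℕ, m ∉ range (C₀ + 1) →
      (-1 : ℝ) ^ m * q ^ ((m : ℤ) * ((m : ℤ) - 1) / 2 - (L : ℤ) * m)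
        * qBinI q ((B : ℤ) + (C₀ : ℤ) - (m : ℤ)) (B : ℤ)
        * qBinI q ((B : ℤ) + 1 + (L : ℤ)) (m : ℤ) = 0 := by
    intro m hm
    have hC : C₀ < m := by
      simpa [Finset.mem_range, Nat.lt_succ_iff] using hm
    have h0 : qBinI q ((B : ℤ) + (C₀ : ℤ) - (m : ℤ)) (B : ℤ) = 0 := by
      rw [qBinI, if_neg]
      rintro ⟨_, h2⟩
      omega
    rw [h0]
    ring
  have hsum : (∑' m : ℕ, (-1 : ℝ) ^ m * q ^ ((m : ℤ) * ((m : ℤ) - 1) / 2 - (L : ℤ) * m)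
        * qBinI q ((B : ℤ) + (C₀ : ℤ) - (m : ℤ)) (B : ℤ)
        * qBinI q ((B : ℤ) + 1 + (L : ℤ)) (m : ℤ))
      = ∑ m ∈ range (C₀ + 1), (-1 : ℝ) ^ m * q ^ ((m : ℤ) * ((m : ℤ) - 1) / 2 - (L : ℤ) * m)
        * qBinI q ((B : ℤ) + (C₀ : ℤ) - (m : ℤ)) (B : ℤ)
        * qBinI q ((B : ℤ) + 1 + (L : ℤ)) (m : ℤ) := tsum_eq_sum hvan
  have hmain : (∑' m : ℕ, (-1 : ℝ) ^ m * q ^ ((m : ℤ) * ((m : ℤ) - 1) / 2 - (L : ℤ) * m)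
        * qBinI q ((B : ℤ) + (C₀ : ℤ) - (m : ℤ)) (B : ℤ)
        * qBinI q ((B : ℤ) + 1 + (L : ℤ)) (m : ℤ))
      = (-1 : ℝ) ^ C₀ * q ^ ((C₀ : ℤ) * ((C₀ : ℤ) - 1) / 2 - (C₀ : ℤ) * (L : ℤ))
          * qBinI q (L : ℤ) (C₀ : ℤ) := by
    rw [hsum]
    apply mul_right_cancel₀ (pow_ne_zero (L * C₀) hqne)
    rw [Finset.sum_mul]
    have hterm : ∀ m ∈ range (C₀ + 1),
        ((-1 : ℝ) ^ m * q ^ ((m : ℤ) * ((m : ℤ) - 1) / 2 - (L : ℤ) * m)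
          * qBinI q ((B : ℤ) + (C₀ : ℤ) - (m : ℤ)) (B : ℤ)
          * qBinI q ((B : ℤ) + 1 + (L : ℤ)) (m : ℤ)) * q ^ (L * C₀)
        = (-1 : ℝ) ^ m * q ^ (m.choose 2 + L * (C₀ - m)) * qb q (B + C₀ - m) B
          * qb q (B + 1 + L) m := by
      intro m hm
      have hm' : m ≤ C₀ := Nat.lt_succ_iff.mp (Finset.mem_range.mp hm)
      have h1 : qBinI q ((B : ℤ) + (C₀ : ℤ) - (m : ℤ)) (B : ℤ) = qb q (B + C₀ - m) B := by
        rw [show (B : ℤ) + (C₀ : ℤ) - (m : ℤ) = ((B + C₀ - m : ℕ) : ℤ) from by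
          rw [Nat.cast_sub (by omega)]; push_cast; ring]
        exact qBinI_natCast hq0 hq1 _ _
      have h2 : qBinI q ((B : ℤ) + 1 + (L : ℤ)) (m : ℤ) = qb q (B + 1 + L) m := by
        rw [show (B : ℤ) + 1 + (L : ℤ) = ((B + 1 + L : ℕ) : ℤ) from by push_cast; ring]
        exact qBinI_natCast hq0 hq1 _ _
      have h3 : q ^ ((m : ℤ) * ((m : ℤ) - 1) / 2 - (L : ℤ) * m) * q ^ (L * C₀)
          = q ^ (m.choose 2 + L * (C₀ - m)) := by
        rw [choose2_int m, ← zpow_natCast q (L * C₀), ← zpow_natCast q (m.choose 2 + L * (C₀ - m)),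
          ← zpow_add₀ hqne]
        congr 1
        push_cast [Nat.cast_sub hm']
        ring
      rw [h1, h2]
      linear_combination ((-1 : ℝ) ^ m * qb q (B + C₀ - m) B * qb q (B + 1 + L) m) * h3
    rw [Finset.sum_congr rfl hterm, lemM hq0 hq1 L C₀ B, qBinI_natCast hq0 hq1]
    have h4 : q ^ ((C₀ : ℤ) * ((C₀ : ℤ) - 1) / 2 - (C₀ : ℤ) * (L : ℤ)) * q ^ (L * C₀)
        = q ^ (C₀.choose 2) := by
      rw [choose2_int C₀, ← zpow_natCast q (L * C₀), ← zpow_natCast q (C₀.choose 2),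
        ← zpow_add₀ hqne]
      congr 1
      push_cast
      ring
    linear_combination ((-1 : ℝ) ^ C₀ * qb q L C₀) * h4.symm
  refine ⟨?_, hmain, ?_⟩
  · apply Set.Finite.subset (Finset.finite_toSet (range (C₀ + 1)))
    intro m hm
    simp only [Set.mem_setOf_eq] at hm
    by_contra hmem
    exact hm (hvan m hmem)
  · intro hLC
    rw [hmain]
    have h0 : qBinI q (L : ℤ) (C₀ : ℤ) = 0 := by
      rw [qBinI, if_neg]
      rintro ⟨_, h2⟩
      omega
    rw [h0]
    ring
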